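/- Let G be a temporal graph with destination vertex z, δ ∈ ℕ, and let (a,t) and (b,t') be vertex appearances with t ≤ t' and a ≠ b. Then: (i) every temporal a-b path in the temporal graph G_{a,t}^{b,t'} departs at time exactly t and arrives at a time in [t'−δ, t']; and (ii) every temporal path in the temporal graph G^{b,t'} that ends at b arrives at a time in [t'−δ, t']. -/

import Mathlib

attribute [local instance] Classical.propDecidable

noncomputable section

/-- A temporal graph: a lifetime `tau` and, for each time step, a set of
undirected edges (unordered pairs of distinct vertices) over `V`;
edges exist only at time steps in `[1, tau]`. -/
structure TemporalGraph (V : Type*) where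
  tau : ℕ
  E : ℕ → Sym2 V → Prop
  time_mem : ∀ t e, E t e → 1 ≤ t ∧ t ≤ tau
  not_diag : ∀ t e, E t e → ¬ e.IsDiag

namespace TemporalGraph

variable {V : Type*}

/-- `G.IsPath s z m vs ts` : the sequence `(({vs (i-1), vs i}, ts i))_{i=1}^m` is a
temporal `s`-`z` path of length `m` in `G` (pairwise distinct vertices
`vs 0 = s, vs 1, …, vs m = z` and nondecreasing time stamps). -/
def IsPath (G : TemporalGraph V) (s z : V) (m : ℕ) (vs : ℕ → V) (ts : ℕ → ℕ) : Prop :=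
  vs 0 = s ∧ vs m = z ∧
  (∀ i j, i ≤ m → j ≤ m → i ≠ j → vs i ≠ vs j) ∧
  (∀ i, 1 ≤ i → i ≤ m → G.E (ts i) s(vs (i - 1), vs i)) ∧
  (∀ i, 1 ≤ i → i + 1 ≤ m → ts i ≤ ts (i + 1))

/-- `δ`-restless temporal path: consecutive time-edges are at most `δ` time steps apart. -/
def IsRestlessPath (G : TemporalGraph V) (δ : ℕ) (s z : V) (m : ℕ) (vs : ℕ → V)
    (ts : ℕ → ℕ) : Prop :=
  G.IsPath s z m vs ts ∧ ∀ i, 1 ≤ i → i + 1 ≤ m → ts (i + 1) ≤ ts i + δ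

/-- temporal `s`-`z` walk (vertices may repeat). -/
def IsWalk (G : TemporalGraph V) (s z : V) (m : ℕ) (vs : ℕ → V) (ts : ℕ → ℕ) : Prop :=
  vs 0 = s ∧ vs m = z ∧
  (∀ i, 1 ≤ i → i ≤ m → G.E (ts i) s(vs (i - 1), vs i)) ∧
  (∀ i, 1 ≤ i → i + 1 ≤ m → ts i ≤ ts (i + 1))

/-- `δ`-restless temporal walk. -/
def IsRestlessWalk (G : TemporalGraph V) (δ : ℕ) (s z : V) (m : ℕ) (vs : ℕ → V)
    (ts : ℕ → ℕ) : Prop :=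
  G.IsWalk s z m vs ts ∧ ∀ i, 1 ≤ i → i + 1 ≤ m → ts (i + 1) ≤ ts i + δ

/-- `G.dist z v t` : the minimum length of a temporal `v`-`z` path in `G` whose
departure time is at least `t`; `⊤` if no such path exists, and `0` for `v = z`. -/
def dist (G : TemporalGraph V) (z v : V) (t : ℕ) : ℕ∞ :=
  if v = z then 0
  else sInf {x : ℕ∞ | ∃ (m : ℕ) (vs : ℕ → V) (ts : ℕ → ℕ),
    G.IsPath v z m vs ts ∧ t ≤ ts 1 ∧ x = (m : ℕ∞)}

/-- The set `A_{a,t}^{b,t'}` of vertex appearances. -/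
def AreaAB (G : TemporalGraph V) (z a : V) (t : ℕ) (b : V) (t' : ℕ) : Set (V × ℕ) :=
  {w | G.dist z b t' < G.dist z w.1 w.2 ∧ G.dist z w.1 w.2 < G.dist z a t ∧
       t ≤ w.2 ∧ w.2 ≤ t'}

/-- The set `A^{b,t'}` of vertex appearances. -/
def AreaB (G : TemporalGraph V) (z b : V) (t' : ℕ) : Set (V × ℕ) :=
  {w | G.dist z b t' < G.dist z w.1 w.2 ∧ G.dist z w.1 w.2 < ⊤ ∧ w.2 ≤ t'}

/-- The temporal graph `G_{a,t}^{b,t'}`. -/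
def SubAB (G : TemporalGraph V) (z : V) (δ : ℕ) (a : V) (t : ℕ) (b : V) (t' : ℕ) :
    TemporalGraph V where
  tau := G.tau
  E := fun u e =>
    (G.E u e ∧ ∃ x y, e = s(x, y) ∧ (x, u) ∈ G.AreaAB z a t b t' ∧
        (y, u) ∈ G.AreaAB z a t b t') ∨
    (G.E u e ∧ u = t ∧ ∃ x, e = s(a, x) ∧ (x, t) ∈ G.AreaAB z a t b t') ∨
    (G.E u e ∧ t' ≤ u + δ ∧ ∃ x, e = s(x, b) ∧
        ((x, u) ∈ G.AreaAB z a t b t' ∨ (x = a ∧ u = t)))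
  time_mem := by rintro u e (⟨h, -⟩ | ⟨h, -⟩ | ⟨h, -⟩) <;> exact G.time_mem u e h
  not_diag := by rintro u e (⟨h, -⟩ | ⟨h, -⟩ | ⟨h, -⟩) <;> exact G.not_diag u e h

/-- The temporal graph `G^{b,t'}`. -/
def SubB (G : TemporalGraph V) (z : V) (δ : ℕ) (b : V) (t' : ℕ) : TemporalGraph V where
  tau := G.tau
  E := fun u e =>
    (G.E u e ∧ ∃ x y, e = s(x, y) ∧ (x, u) ∈ G.AreaB z b t' ∧ (y, u) ∈ G.AreaB z b t') ∨
    (G.E u e ∧ t' ≤ u + δ ∧ ∃ x, e = s(x, b) ∧ (x, u) ∈ G.AreaB z b t')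
  time_mem := by rintro u e (⟨h, -⟩ | ⟨h, -⟩) <;> exact G.time_mem u e h
  not_diag := by rintro u e (⟨h, -⟩ | ⟨h, -⟩) <;> exact G.not_diag u e h

/-- The vertex set of a temporal graph: all endpoints of its time-edges. -/
def vertexSet (G : TemporalGraph V) : Set V := {x | ∃ u e, G.E u e ∧ x ∈ e}

/-- Minimum length of a `δ`-restless temporal `a`-`b` path in `G` (`⊤` if none). -/
def restlessDist (G : TemporalGraph V) (δ : ℕ) (a b : V) : ℕ∞ :=
  sInf {x : ℕ∞ | ∃ m vs ts, G.IsRestlessPath δ a b m vs ts ∧ x = (m : ℕ∞)}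

/-- The base case of the table `T`: the value `T[u,t']` when `d(s,1) - d(u,t') ≤ ℓ`. -/
def tableBase (G : TemporalGraph V) (s z : V) (δ ℓ : ℕ) (u : V) (t' : ℕ) : ℕ∞ :=
  if u = s then 0
  else if 1 ≤ restlessDist (G.SubB z δ u t') δ s u ∧
          restlessDist (G.SubB z δ u t') δ s u ≤ (2 * ℓ : ℕ)
    then restlessDist (G.SubB z δ u t') δ s u
    else ⊤

/-- Fuelled version of the recursively defined table `T` (the fuel is an upper
bound on the recursion depth, which strictly decreases along the recursion of
the table via `d(s,1) - d(·,·)`). -/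
def tableFuel (G : TemporalGraph V) (s z : V) (δ ℓ : ℕ) : ℕ → V → ℕ → ℕ∞
  | 0, u, t' => tableBase G s z δ ℓ u t'
  | n + 1, u, t' =>
    if G.dist z s 1 - G.dist z u t' ≤ (ℓ : ℕ∞) then tableBase G s z δ ℓ u t'
    else sInf (insert ⊤ {x : ℕ∞ | ∃ (v : V) (t ℓ' : ℕ),
      1 ≤ t ∧ t ≤ t' ∧ (∃ e, G.E t e ∧ v ∈ e) ∧
      G.dist z u t' < G.dist z v t ∧ G.dist z v t ≤ G.dist z u t' + (ℓ : ℕ∞) + 1 ∧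
      1 ≤ ℓ' ∧ ℓ' ≤ 2 * ℓ + 1 ∧
      restlessDist (G.SubAB z δ v t u t') δ v u = (ℓ' : ℕ∞) ∧
      x = tableFuel G s z δ ℓ n v t + (ℓ' : ℕ∞)})

/-- The table `T` of the dynamic program, for the instance `(G,s,z,δ,k)`
(with `ℓ := k - d(s,1)`). -/
def table (G : TemporalGraph V) (s z : V) (δ k : ℕ) (u : V) (t' : ℕ) : ℕ∞ :=
  tableFuel G s z δ (k - (G.dist z s 1).toNat) ((G.dist z s 1).toNat + 1) u t'

/-- `vs i` is a distance separator of the temporal `s`-`z` path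
`(({vs (i-1), vs i}, ts i))_{i=1}^k` (with the convention `ts (k+1) = ts k`). -/
def IsDistSep (G : TemporalGraph V) (z : V) (k : ℕ) (vs : ℕ → V) (ts : ℕ → ℕ)
    (i : ℕ) : Prop :=
  (∀ j, j < i → G.dist z (vs i) (ts (i + 1)) < G.dist z (vs j) (ts (j + 1))) ∧
  (∀ j, i < j → j ≤ k → G.dist z (vs j) (ts (j + 1)) < G.dist z (vs i) (ts (i + 1)))

/-- The underlying (static) graph of a temporal graph. -/
def underlying (G : TemporalGraph V) : SimpleGraph V where
  Adj x y := ∃ t, G.E t s(x, y)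
  symm := by
    constructor
    rintro x y ⟨t, h⟩
    exact ⟨t, by rwa [Sym2.eq_swap]⟩
  loopless := by
    constructor
    rintro x ⟨t, h⟩
    exact G.not_diag t _ h (by simp)

/-- The set of non-isolated vertex appearances of `G`. -/
def NonIsolated (G : TemporalGraph V) : Set (V × ℕ) := {p | ∃ e, G.E p.2 e ∧ p.1 ∈ e}

/-- The weighted arcs of the auxiliary directed graph `D` (for destination `z`):
`DArc G z x y w` means there is an arc from `x` to `y` of weight `w`.
`Sum.inl ()` is the special vertex `z` of `D`; `Sum.inr (v, t)` is the vertex `v_t`. -/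
def DArc (G : TemporalGraph V) (z : V) : Unit ⊕ V × ℕ → Unit ⊕ V × ℕ → ℕ → Prop
  | Sum.inr (v, ta), Sum.inr (u, tb), w =>
      (w = 1 ∧ ta = tb ∧ v ≠ u ∧ G.E ta s(v, u)) ∨
      (w = 0 ∧ v = u ∧ (v, ta) ∈ G.NonIsolated ∧ (v, tb) ∈ G.NonIsolated ∧ tb < ta ∧
        ∀ t'', tb < t'' → t'' < ta → (v, t'') ∉ G.NonIsolated)
  | Sum.inl _, Sum.inr (u, tb), w =>
      w = 0 ∧ u = z ∧ (z, tb) ∈ G.NonIsolated ∧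
        ∀ t'', (z, t'') ∈ G.NonIsolated → t'' ≤ tb
  | _, _, _ => False

/-- The minimum total arc weight of a directed path in `D` from the special
vertex `z` to the vertex `v_t` (`⊤` if `v_t` is not reachable from `z`). -/
def dMinWeight (G : TemporalGraph V) (z v : V) (t : ℕ) : ℕ∞ :=
  sInf {x : ℕ∞ | ∃ (n : ℕ) (w : ℕ → Unit ⊕ V × ℕ) (wt : ℕ → ℕ),
    w 0 = Sum.inl () ∧ w n = Sum.inr (v, t) ∧
    (∀ i j, i ≤ n → j ≤ n → i ≠ j → w i ≠ w j) ∧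
    (∀ i, i < n → DArc G z (w i) (w (i + 1)) (wt i)) ∧
    x = ∑ i ∈ Finset.range n, (wt i : ℕ∞)}

end TemporalGraph

open TemporalGraph
/-!
Distance to `z` is monotone in the departure time. Hence `(a, u)` never lies in
`A_{a,t}^{b,t'}` (that would need `d(a,u) < d(a,t)` with `u ≥ t`), and `(b, u)` lies in neither
`A_{a,t}^{b,t'}` nor `A^{b,t'}` (that would need `d(b,t') < d(b,u)` with `u ≤ t'`). So the only
time-edges of `G_{a,t}^{b,t'}` at `a` are those at time `t`, and the only time-edges of either
graph at `b` are those at times in `[t'-δ, t']`. Apply this to the first and last edge of a path.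
-/

namespace TemporalGraph

variable {V : Type*} {G : TemporalGraph V} {z : V} {δ : ℕ}

theorem dist_mono (G : TemporalGraph V) (z v : V) : Monotone (G.dist z v) := by
  intro t₁ t₂ h
  unfold dist
  split
  · exact le_rfl
  · apply sInf_le_sInf
    rintro x ⟨m, vs, ts, hp, ht, hx⟩
    exact ⟨m, vs, ts, hp, h.trans ht, hx⟩

section Areas

variable {a b : V} {t t' u : ℕ}

theorem mk_left_notMem_areaAB : (a, u) ∉ G.AreaAB z a t b t' :=
  fun ⟨_, hlt, htu, _⟩ => (G.dist_mono z a htu).not_gt hlt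

theorem mk_right_notMem_areaAB : (b, u) ∉ G.AreaAB z a t b t' :=
  fun ⟨hlt, _, _, hut⟩ => (G.dist_mono z b hut).not_gt hlt

theorem mk_notMem_areaB : (b, u) ∉ G.AreaB z b t' :=
  fun ⟨hlt, _, hut⟩ => (G.dist_mono z b hut).not_gt hlt

end Areas

namespace IsPath

variable {s w : V} {m : ℕ} {vs : ℕ → V} {ts : ℕ → ℕ}

theorem one_le_length (hp : G.IsPath s w m vs ts) (hsw : s ≠ w) : 1 ≤ m := by
  obtain ⟨h0, hm, -⟩ := hp
  refine Nat.one_le_iff_ne_zero.mpr fun hm0 => hsw ?_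
  rw [← h0, ← hm, hm0]

theorem first_edge (hp : G.IsPath s w m vs ts) (hm : 1 ≤ m) : G.E (ts 1) s(s, vs 1) := by
  simpa [hp.1] using hp.2.2.2.1 1 le_rfl hm

theorem last_edge (hp : G.IsPath s w m vs ts) (hm : 1 ≤ m) :
    G.E (ts m) s(vs (m - 1), w) := by
  simpa [hp.2.1] using hp.2.2.2.1 m hm le_rfl

theorem pred_length_ne (hp : G.IsPath s w m vs ts) (hm : 1 ≤ m) : vs (m - 1) ≠ w :=
  hp.2.1 ▸ hp.2.2.1 (m - 1) m (by omega) le_rfl (by omega)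

end IsPath

section EdgeTimes

variable {a b x : V} {t t' u : ℕ}

theorem subAB_time_eq_of_edge_at_source (hab : a ≠ b)
    (he : (G.SubAB z δ a t b t').E u s(a, x)) :
    u = t := by
  rcases he with ⟨-, y₁, y₂, he, hy₁, hy₂⟩ | ⟨-, hu, -⟩ | ⟨-, -, y, he, hy⟩
  · rcases Sym2.eq_iff.mp he with ⟨rfl, -⟩ | ⟨rfl, -⟩
    · exact absurd hy₁ mk_left_notMem_areaAB
    · exact absurd hy₂ mk_left_notMem_areaAB
  · exact hu
  · rcases Sym2.eq_iff.mp he with ⟨rfl, -⟩ | ⟨hab', -⟩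
    · exact (hy.resolve_left mk_left_notMem_areaAB).2
    · exact absurd hab' hab

theorem subAB_time_bounds_of_edge_at_target (htt : t ≤ t') (hab : a ≠ b) (hxb : x ≠ b)
    (he : (G.SubAB z δ a t b t').E u s(x, b)) : t' ≤ u + δ ∧ u ≤ t' := by
  rcases he with ⟨-, y₁, y₂, he, hy₁, hy₂⟩ | ⟨-, -, y, he, hy⟩ | ⟨-, hδ, y, he, hy⟩
  · rcases Sym2.eq_iff.mp he with ⟨-, rfl⟩ | ⟨-, rfl⟩
    · exact absurd hy₂ mk_right_notMem_areaAB
    · exact absurd hy₁ mk_right_notMem_areaAB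
  · rcases Sym2.eq_iff.mp he with ⟨-, rfl⟩ | ⟨-, hba⟩
    · exact absurd hy mk_right_notMem_areaAB
    · exact absurd hba.symm hab
  · rcases Sym2.eq_iff.mp he with ⟨rfl, -⟩ | ⟨hxb', -⟩
    · rcases hy with hy | ⟨-, rfl⟩
      · exact ⟨hδ, hy.2.2.2⟩
      · exact ⟨hδ, htt⟩
    · exact absurd hxb' hxb

theorem subB_time_bounds_of_edge_at_target (hxb : x ≠ b)
    (he : (G.SubB z δ b t').E u s(x, b)) : t' ≤ u + δ ∧ u ≤ t' := by
  rcases he with ⟨-, y₁, y₂, he, hy₁, hy₂⟩ | ⟨-, hδ, y, he, hy⟩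
  · rcases Sym2.eq_iff.mp he with ⟨-, rfl⟩ | ⟨-, rfl⟩
    · exact absurd hy₂ mk_notMem_areaB
    · exact absurd hy₁ mk_notMem_areaB
  · rcases Sym2.eq_iff.mp he with ⟨rfl, -⟩ | ⟨hxb', -⟩
    · exact ⟨hδ, hy.2.2⟩
    · exact absurd hxb' hxb

end EdgeTimes

end TemporalGraph

theorem statement13_general {V : Type*} (G : TemporalGraph V) (z : V) (δ : ℕ)
    (a : V) (t : ℕ) (b : V) (t' : ℕ) (htt : t ≤ t') (hab : a ≠ b) :
    (∀ m vs ts, (G.SubAB z δ a t b t').IsPath a b m vs ts →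
      ts 1 = t ∧ t' ≤ ts m + δ ∧ ts m ≤ t') ∧
    (∀ w m vs ts, (G.SubB z δ b t').IsPath w b m vs ts → 1 ≤ m →
      t' ≤ ts m + δ ∧ ts m ≤ t') := by
  constructor
  · intro m vs ts hp
    have hm := hp.one_le_length hab
    exact ⟨subAB_time_eq_of_edge_at_source hab (hp.first_edge hm),
      subAB_time_bounds_of_edge_at_target htt hab (hp.pred_length_ne hm) (hp.last_edge hm)⟩
  · intro w m vs ts hp hm
    exact subB_time_bounds_of_edge_at_target (hp.pred_length_ne hm) (hp.last_edge hm)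

/-- (i) Every temporal `a`-`b` path in `G_{a,t}^{b,t'}`
departs at time exactly `t` and arrives at a time in `[t'-δ, t']`;
(ii) every temporal path in `G^{b,t'}` that ends at `b` arrives at a time in
`[t'-δ, t']`. -/
theorem statement13 {V : Type*} (G : TemporalGraph V) (z : V) (δ : ℕ) (hδ : 1 ≤ δ)
    (a : V) (t : ℕ) (b : V) (t' : ℕ) (htt : t ≤ t') (hab : a ≠ b) :
    (∀ m vs ts, (G.SubAB z δ a t b t').IsPath a b m vs ts →
      ts 1 = t ∧ t' ≤ ts m + δ ∧ ts m ≤ t') ∧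
    (∀ w m vs ts, (G.SubB z δ b t').IsPath w b m vs ts → 1 ≤ m →
      t' ≤ ts m + δ ∧ ts m ≤ t') :=
  statement13_general G z δ a t b t' htt hab
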